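/- arXiv:1908.04327 — 5 statements merged into one kernel-verified Lean document; each statement's English description precedes it below -/
import Mathlib

section
/- In the ISD setup, I(X2; Y1 | X1) ≤ H(g1(X2, Z1)) − H(Z1). -/
open MeasureTheory ProbabilityTheory Real

/-- The probability that a random variable `X` takes the value `x`. -/
noncomputable def prob {Ω : Type*} [MeasurableSpace Ω] (μ : Measure Ω)
    {α : Type*} (X : Ω → α) (x : α) : ℝ :=
  (μ {ω | X ω = x}).toReal

/-- Shannon entropy `H(X) = ∑ₓ −P(X=x)·log P(X=x)` (natural logarithm). -/
noncomputable def entropy {Ω : Type*} [MeasurableSpace Ω] (μ : Measure Ω)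
    {α : Type*} (X : Ω → α) : ℝ :=
  ∑' x : α, negMulLog (prob μ X x)

/-- Conditional entropy `H(X | Y) = ∑_y P(Y=y) · H(X | Y = y)`. -/
noncomputable def condEntropy {Ω : Type*} [MeasurableSpace Ω] (μ : Measure Ω)
    {α β : Type*} (X : Ω → α) (Y : Ω → β) : ℝ :=
  ∑' y : β, prob μ Y y *
    ∑' x : α, negMulLog ((μ {ω | X ω = x ∧ Y ω = y}).toReal / prob μ Y y)


/-- Conditional mutual information `I(X;Y|Z) = H(X|Z) − H(X|(Y,Z))`. -/
noncomputable def condMutualInfo {Ω : Type*} [MeasurableSpace Ω] (μ : Measure Ω)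
    {α β γ : Type*} (X : Ω → α) (Y : Ω → β) (Z : Ω → γ) : ℝ :=
  condEntropy μ X Z - condEntropy μ X (fun ω => (Y ω, Z ω))

/-!
Since conditional mutual information is symmetric, `I(X2; Y1 | X1) = H(Y1 | X1) - H(Y1 | X2, X1)`.
As `f1 x1` is injective, `H(Y1 | X1) = H(T1 | X1) ≤ H(T1)` for `T1 = g1(X2, Z1)`; as
`z ↦ f1 x1 (g1 x2 z)` is injective, `H(Y1 | X2, X1) = H(Z1 | X2, X1)`, which is `H(Z1)` by
independence. The codomains of `f1` and `g1` carry no σ-algebra, so measurability is tracked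
through fibres: every variable here is a function of the measurable triple `(X1, X2, Z1)`.
-/

open Finset

section Entropy

variable {Ω α β γ : Type*} [MeasurableSpace Ω] {μ : Measure Ω}

def MeasurableFibers (X : Ω → α) : Prop := ∀ x, MeasurableSet (X ⁻¹' {x})

lemma Measurable.measurableFibers_comp {S : Type*} [MeasurableSpace S] [Finite S]
    [MeasurableSingletonClass S] {W : Ω → S} (hW : Measurable W) (F : S → α) :
    MeasurableFibers fun ω => F (W ω) :=
  fun x => hW (Set.toFinite (F ⁻¹' {x})).measurableSet

lemma prob_nonneg (X : Ω → α) (x : α) : 0 ≤ prob μ X x := ENNReal.toReal_nonneg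

lemma entropy_eq_sum [Fintype α] (X : Ω → α) :
    entropy μ X = ∑ x, negMulLog (prob μ X x) :=
  tsum_fintype _

lemma condEntropy_eq_sum [Fintype α] [Fintype β] (X : Ω → α) (Y : Ω → β) :
    condEntropy μ X Y = ∑ y, prob μ Y y *
      ∑ x, negMulLog (prob μ (fun ω => (X ω, Y ω)) (x, y) / prob μ Y y) := by
  simp only [condEntropy, prob, tsum_fintype, Prod.mk.injEq]

lemma prob_prodMk_le_right [IsFiniteMeasure μ] (X : Ω → α) (Y : Ω → β) (x : α) (y : β) :
    prob μ (fun ω => (X ω, Y ω)) (x, y) ≤ prob μ Y y :=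
  ENNReal.toReal_mono (measure_ne_top _ _) (measure_mono fun _ h => congrArg Prod.snd h)

lemma prob_prodMk_eq_zero_of_right [IsFiniteMeasure μ] {Y : Ω → β} {y : β}
    (hy : prob μ Y y = 0) (X : Ω → α) (x : α) :
    prob μ (fun ω => (X ω, Y ω)) (x, y) = 0 :=
  le_antisymm (hy ▸ prob_prodMk_le_right X Y x y) (prob_nonneg _ _)

lemma sum_toReal_measure_fiber_inter [Fintype α] [IsFiniteMeasure μ] {X : Ω → α}
    (hX : MeasurableFibers X) (s : Set Ω) :
    ∑ x, (μ (X ⁻¹' {x} ∩ s)).toReal = (μ s).toReal := by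
  have h := sum_measure_preimage_singleton (μ := μ.restrict s) univ fun x _ => hX x
  simp only [coe_univ, Set.preimage_univ, Measure.restrict_apply (hX _),
    Measure.restrict_apply MeasurableSet.univ, Set.univ_inter] at h
  rw [← h, ENNReal.toReal_sum fun _ _ => measure_ne_top _ _]

lemma sum_prob [Fintype α] [IsProbabilityMeasure μ] {X : Ω → α} (hX : MeasurableFibers X) :
    ∑ x, prob μ X x = 1 := by
  have h := sum_toReal_measure_fiber_inter (μ := μ) hX Set.univ
  simp only [Set.inter_univ, measure_univ, ENNReal.toReal_one] at h
  exact h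

lemma sum_prob_prodMk_left [Fintype α] [IsFiniteMeasure μ] {X : Ω → α}
    (hX : MeasurableFibers X) (Y : Ω → β) (y : β) :
    ∑ x, prob μ (fun ω => (X ω, Y ω)) (x, y) = prob μ Y y := by
  simp only [prob, Prod.mk.injEq]
  exact sum_toReal_measure_fiber_inter hX _

lemma sum_prob_prodMk_right [Fintype β] [IsFiniteMeasure μ] (X : Ω → α) {Y : Ω → β}
    (hY : MeasurableFibers Y) (x : α) :
    ∑ y, prob μ (fun ω => (X ω, Y ω)) (x, y) = prob μ X x := by
  simp only [prob, Prod.mk.injEq, and_comm (a := X _ = x)]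
  exact sum_toReal_measure_fiber_inter hY _

theorem entropy_comp_of_injective {σ : α → β} (hσ : Function.Injective σ) (X : Ω → α) :
    entropy μ (fun ω => σ (X ω)) = entropy μ X := by
  unfold entropy
  rw [← hσ.tsum_eq]
  · simp only [prob, hσ.eq_iff]
  · intro y hy
    by_contra h
    have : {ω | σ (X ω) = y} = ∅ := Set.eq_empty_of_forall_notMem fun ω hω => h ⟨X ω, hω⟩
    simp [prob, this] at hy

theorem condEntropy_comp_of_injective {φ : β → α → γ} (hφ : ∀ y, Function.Injective (φ y))
    (X : Ω → α) (Y : Ω → β) :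
    condEntropy μ (fun ω => φ (Y ω) (X ω)) Y = condEntropy μ X Y := by
  unfold condEntropy
  congr! 3 with y
  rw [← (hφ y).tsum_eq]
  · have (x : α) : {ω | φ (Y ω) (X ω) = φ y x ∧ Y ω = y} = {ω | X ω = x ∧ Y ω = y} := by
      ext ω
      by_cases hω : Y ω = y <;> simp [hω, (hφ y).eq_iff]
    simp only [this]
  · intro t ht
    by_contra h
    have : {ω | φ (Y ω) (X ω) = t ∧ Y ω = y} = ∅ :=
      Set.eq_empty_of_forall_notMem fun ω ⟨hω, hy⟩ => h ⟨X ω, hy ▸ hω⟩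
    simp [this] at ht

theorem condEntropy_eq_entropy_sub [Fintype α] [Fintype β] [IsFiniteMeasure μ] {X : Ω → α}
    (hX : MeasurableFibers X) (Y : Ω → β) :
    condEntropy μ X Y = entropy μ (fun ω => (X ω, Y ω)) - entropy μ Y := by
  rw [condEntropy_eq_sum, entropy_eq_sum, entropy_eq_sum, Fintype.sum_prod_type_right,
    eq_sub_iff_add_eq, ← sum_add_distrib]
  refine sum_congr rfl fun y _ => ?_
  set q := fun x => prob μ (fun ω => (X ω, Y ω)) (x, y)
  rcases eq_or_ne (prob μ Y y) 0 with hy | hy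
  · simp [hy, prob_prodMk_eq_zero_of_right hy]
  calc prob μ Y y * ∑ x, negMulLog (q x / prob μ Y y) + negMulLog (prob μ Y y)
      = ∑ x, (prob μ Y y * negMulLog (q x / prob μ Y y)
          + q x / prob μ Y y * negMulLog (prob μ Y y)) := by
        rw [sum_add_distrib, ← mul_sum, ← sum_mul, ← sum_div, sum_prob_prodMk_left hX,
          div_self hy, one_mul]
    _ = ∑ x, negMulLog (q x) :=
        sum_congr rfl fun x _ => by rw [← negMulLog_mul, div_mul_cancel₀ _ hy]

theorem condEntropy_le_entropy [Fintype α] [Fintype β] [IsProbabilityMeasure μ] (X : Ω → α)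
    {Y : Ω → β} (hY : MeasurableFibers Y) :
    condEntropy μ X Y ≤ entropy μ X := by
  rw [condEntropy_eq_sum, entropy_eq_sum]
  simp only [mul_sum]
  rw [sum_comm]
  gcongr with x
  set q := fun y => prob μ (fun ω => (X ω, Y ω)) (x, y)
  have hmarg : ∑ y, prob μ Y y * (q y / prob μ Y y) = prob μ X x := by
    rw [← sum_prob_prodMk_right X hY x]
    refine sum_congr rfl fun y _ => ?_
    rcases eq_or_ne (prob μ Y y) 0 with hy | hy
    · simp [q, hy, prob_prodMk_eq_zero_of_right hy]
    · exact mul_div_cancel₀ _ hy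
  simpa [hmarg] using concaveOn_negMulLog.le_map_sum (p := fun y => q y / prob μ Y y)
    (fun y _ => prob_nonneg Y y) (sum_prob (μ := μ) hY)
    fun y _ => Set.mem_Ici.2 (div_nonneg (prob_nonneg _ _) (prob_nonneg _ _))

theorem condEntropy_eq_entropy_of_indepFun [MeasurableSpace α] [MeasurableSingletonClass α]
    [MeasurableSpace β] [MeasurableSingletonClass β] [Fintype β] [IsProbabilityMeasure μ]
    {X : Ω → α} {Y : Ω → β} (hY : MeasurableFibers Y) (hXY : IndepFun X Y μ) :
    condEntropy μ X Y = entropy μ X := by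
  have hfac (x : α) (y : β) :
      (μ {ω | X ω = x ∧ Y ω = y}).toReal = prob μ X x * prob μ Y y := by
    rw [prob, prob, ← ENNReal.toReal_mul]
    exact congrArg _ (hXY.measure_inter_preimage_eq_mul _ _
      (measurableSet_singleton x) (measurableSet_singleton y))
  unfold condEntropy
  rw [tsum_fintype]
  calc ∑ y, prob μ Y y * ∑' x, negMulLog ((μ {ω | X ω = x ∧ Y ω = y}).toReal / prob μ Y y)
      = ∑ y, prob μ Y y * entropy μ X := sum_congr rfl fun y _ => by
        rcases eq_or_ne (prob μ Y y) 0 with hy | hy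
        · simp [hy]
        · simp only [hfac, mul_div_cancel_right₀ _ hy, entropy]
    _ = entropy μ X := by rw [← sum_mul, sum_prob hY, one_mul]

theorem condMutualInfo_comm [Fintype α] [Fintype β] [Fintype γ] [IsFiniteMeasure μ]
    {X : Ω → α} {Y : Ω → β} (hX : MeasurableFibers X) (hY : MeasurableFibers Y) (Z : Ω → γ) :
    condMutualInfo μ X Y Z = condMutualInfo μ Y X Z := by
  have hswap : entropy μ (fun ω => (X ω, Y ω, Z ω)) = entropy μ (fun ω => (Y ω, X ω, Z ω)) :=
    entropy_comp_of_injective (σ := fun p : β × α × γ => (p.2.1, p.1, p.2.2))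
      (by rintro ⟨_, _, _⟩ ⟨_, _, _⟩ h; simp_all) fun ω => (Y ω, X ω, Z ω)
  simp only [condMutualInfo, condEntropy_eq_entropy_sub hX, condEntropy_eq_entropy_sub hY, hswap]
  ring

end Entropy

/-- In the ISD setup, `I(X2; Y1 | X1) ≤ H(g1(X2, Z1)) − H(Z1)`. -/
theorem isd_condMutualInfo_le
    {Ω 𝒳1 𝒳2 𝒵1 𝒯1 𝒴1 : Type*} [MeasurableSpace Ω]
    [Fintype 𝒳1] [Fintype 𝒳2] [Fintype 𝒵1] [Fintype 𝒯1] [Fintype 𝒴1]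
    [MeasurableSpace 𝒳1] [MeasurableSingletonClass 𝒳1]
    [MeasurableSpace 𝒳2] [MeasurableSingletonClass 𝒳2]
    [MeasurableSpace 𝒵1] [MeasurableSingletonClass 𝒵1]
    (μ : Measure Ω) [IsProbabilityMeasure μ]
    (g1 : 𝒳2 → 𝒵1 → 𝒯1) (hg1 : ∀ x2, Function.Injective (g1 x2))
    (f1 : 𝒳1 → 𝒯1 → 𝒴1) (hf1 : ∀ x1, Function.Injective (f1 x1))
    (X1 : Ω → 𝒳1) (X2 : Ω → 𝒳2) (Z1 : Ω → 𝒵1)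
    (hX1 : Measurable X1) (hX2 : Measurable X2) (hZ1 : Measurable Z1)
    (hindep : IndepFun Z1 (fun ω => (X1 ω, X2 ω)) μ)
    (Y1 : Ω → 𝒴1) (hY1 : ∀ ω, Y1 ω = f1 (X1 ω) (g1 (X2 ω) (Z1 ω))) :
    condMutualInfo μ X2 Y1 X1
      ≤ entropy μ (fun ω => g1 (X2 ω) (Z1 ω)) - entropy μ Z1 := by
  obtain rfl : Y1 = fun ω => f1 (X1 ω) (g1 (X2 ω) (Z1 ω)) := funext hY1
  have hW : Measurable fun ω => (X1 ω, X2 ω, Z1 ω) := hX1.prodMk (hX2.prodMk hZ1)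
  have hX1' : MeasurableFibers X1 := hW.measurableFibers_comp Prod.fst
  have hX2' : MeasurableFibers X2 := hW.measurableFibers_comp fun s => s.2.1
  have hX21 : MeasurableFibers fun ω => (X2 ω, X1 ω) :=
    hW.measurableFibers_comp fun s => (s.2.1, s.1)
  have hY1' : MeasurableFibers fun ω => f1 (X1 ω) (g1 (X2 ω) (Z1 ω)) :=
    hW.measurableFibers_comp fun s => f1 s.1 (g1 s.2.1 s.2.2)
  have hindep' : IndepFun Z1 (fun ω => (X2 ω, X1 ω)) μ :=
    hindep.comp measurable_id measurable_swap
  calc condMutualInfo μ X2 (fun ω => f1 (X1 ω) (g1 (X2 ω) (Z1 ω))) X1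
      = condEntropy μ (fun ω => g1 (X2 ω) (Z1 ω)) X1
          - condEntropy μ Z1 (fun ω => (X2 ω, X1 ω)) := by
        rw [condMutualInfo_comm hX2' hY1', condMutualInfo,
          condEntropy_comp_of_injective hf1 (fun ω => g1 (X2 ω) (Z1 ω)) X1,
          condEntropy_comp_of_injective (φ := fun w z => f1 w.2 (g1 w.1 z))
            (fun w _ _ h => hg1 w.1 (hf1 w.2 h)) Z1 fun ω => (X2 ω, X1 ω)]
    _ ≤ entropy μ (fun ω => g1 (X2 ω) (Z1 ω)) - entropy μ Z1 :=
        sub_le_sub (condEntropy_le_entropy _ hX1')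
          (condEntropy_eq_entropy_of_indepFun hX21 hindep').ge
end

section
/- In the ISD setup, if moreover X1 is independent of the pair (X2, Z1), then I(X2; Y1 | X1) = H(g1(X2, Z1)) − H(Z1). -/
open MeasureTheory ProbabilityTheory Real

section Aux

variable {Ω : Type*} [MeasurableSpace Ω] {μ : Measure Ω}

lemma sum_prob_eq_one {α : Type*} [Fintype α] [IsProbabilityMeasure μ]
    {X : Ω → α} (hX : ∀ x, MeasurableSet {ω | X ω = x}) :
    ∑ x, prob μ X x = 1 := by
  have hdisj : Pairwise (Function.onFun Disjoint (fun x => {ω | X ω = x})) := by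
    intro a b hab
    simp only [Function.onFun, Set.disjoint_left]
    intro ω ha hb
    exact hab (ha.symm.trans hb)
  have h : ∑ x, μ {ω | X ω = x} = 1 := by
    rw [← tsum_fintype (L := .unconditional _), ← measure_iUnion hdisj hX]
    have : (⋃ x, {ω | X ω = x}) = Set.univ := by
      ext ω; simp
    rw [this, measure_univ]
  simp only [prob]
  rw [← ENNReal.toReal_sum (fun a _ => measure_ne_top μ _), h]
  simp

lemma sum_joint_eq_prob {α β : Type*} [Fintype α] [IsProbabilityMeasure μ]
    {X : Ω → α} {Y : Ω → β}
    (hXY : ∀ x y, MeasurableSet {ω | X ω = x ∧ Y ω = y}) (y : β) :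
    ∑ x, (μ {ω | X ω = x ∧ Y ω = y}).toReal = prob μ Y y := by
  have hdisj : Pairwise (Function.onFun Disjoint (fun x => {ω | X ω = x ∧ Y ω = y})) := by
    intro a b hab
    simp only [Function.onFun, Set.disjoint_left]
    intro ω ha hb
    exact hab (ha.1.symm.trans hb.1)
  have h : ∑ x, μ {ω | X ω = x ∧ Y ω = y} = μ {ω | Y ω = y} := by
    rw [← tsum_fintype (L := .unconditional _), ← measure_iUnion hdisj (fun x => hXY x y)]
    congr 1
    ext ω; simp
  rw [prob, ← h, ENNReal.toReal_sum (fun a _ => measure_ne_top μ _)]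

lemma entropy_comp_inj {α β : Type*} [Fintype α] [Fintype β]
    [DecidableEq β] (μ : Measure Ω) (X : Ω → α) (e : α → β) (he : Function.Injective e) :
    entropy μ (fun ω => e (X ω)) = entropy μ X := by
  rw [entropy, entropy, tsum_fintype, tsum_fintype]
  have hzero : ∀ y ∈ Finset.univ, y ∉ Finset.univ.image e →
      negMulLog (prob μ (fun ω => e (X ω)) y) = 0 := by
    intro y _ hy
    have : {ω | e (X ω) = y} = ∅ := by
      ext ω
      simp only [Set.mem_setOf_eq, Set.mem_empty_iff_false, iff_false]
      intro h
      exact hy (Finset.mem_image.2 ⟨X ω, Finset.mem_univ _, h⟩)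
    rw [prob, this]
    simp
  rw [← Finset.sum_subset (Finset.subset_univ _) hzero,
    Finset.sum_image (by intro x _ y _ h; exact he h)]
  apply Finset.sum_congr rfl
  intro x _
  have hset : {ω | e (X ω) = e x} = {ω | X ω = x} := by
    ext ω
    simp only [Set.mem_setOf_eq]
    exact ⟨fun h => he h, fun h => by rw [h]⟩
  rw [prob, prob, hset]

end Aux

section Aux2

variable {Ω : Type*} [MeasurableSpace Ω] {μ : Measure Ω}

lemma prob_pair {α β : Type*} (X : Ω → α) (Y : Ω → β) (x : α) (y : β) :
    prob μ (fun ω => (X ω, Y ω)) (x, y) = (μ {ω | X ω = x ∧ Y ω = y}).toReal := by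
  rw [prob]
  congr 1
  congr 1
  ext ω
  simp [Prod.ext_iff]

lemma negMulLog_div_key {p : ℝ} (hp : 0 < p) {a : ℝ} (ha : 0 ≤ a) :
    p * negMulLog (a / p) = negMulLog a + a * Real.log p := by
  rcases eq_or_lt_of_le ha with h | h
  · simp [← h, negMulLog]
  · rw [negMulLog, negMulLog, Real.log_div (ne_of_gt h) (ne_of_gt hp)]
    field_simp
    ring

lemma prob_joint_le {α β : Type*} [IsFiniteMeasure μ] (X : Ω → α) (Y : Ω → β) (x : α) (y : β) :
    (μ {ω | X ω = x ∧ Y ω = y}).toReal ≤ prob μ Y y := by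
  rw [prob]
  exact ENNReal.toReal_mono (measure_ne_top μ _) (measure_mono (fun ω h => h.2))

lemma condEntropy_eq_sub {α β : Type*} [Fintype α] [Fintype β] [IsProbabilityMeasure μ]
    {X : Ω → α} {Y : Ω → β}
    (hXY : ∀ x y, MeasurableSet {ω | X ω = x ∧ Y ω = y}) :
    condEntropy μ X Y = entropy μ (fun ω => (X ω, Y ω)) - entropy μ Y := by
  rw [condEntropy, entropy, entropy, tsum_fintype, tsum_fintype, tsum_fintype]
  simp only [tsum_fintype]
  have hpair : ∑ p : α × β, negMulLog (prob μ (fun ω => (X ω, Y ω)) p)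
      = ∑ y, ∑ x, negMulLog ((μ {ω | X ω = x ∧ Y ω = y}).toReal) := by
    rw [Fintype.sum_prod_type, Finset.sum_comm]
    apply Finset.sum_congr rfl; intro y _
    apply Finset.sum_congr rfl; intro x _
    rw [prob_pair]
  rw [hpair, ← Finset.sum_sub_distrib]
  apply Finset.sum_congr rfl
  intro y _
  set p := prob μ Y y with hp
  rcases eq_or_ne p 0 with h0 | h0
  · have hμ : μ {ω | Y ω = y} = 0 := by
      have := h0
      rw [hp, prob, ENNReal.toReal_eq_zero_iff] at this
      exact this.resolve_right (measure_ne_top μ _)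
    have hj : ∀ x, μ {ω | X ω = x ∧ Y ω = y} = 0 :=
      fun x => measure_mono_null (fun ω h => h.2) hμ
    simp [h0, hj, prob, hμ]
  · have hppos : 0 < p := lt_of_le_of_ne ENNReal.toReal_nonneg (Ne.symm h0)
    rw [Finset.mul_sum]
    have : ∀ x ∈ Finset.univ, p * negMulLog ((μ {ω | X ω = x ∧ Y ω = y}).toReal / p)
        = negMulLog ((μ {ω | X ω = x ∧ Y ω = y}).toReal)
          + (μ {ω | X ω = x ∧ Y ω = y}).toReal * Real.log p := by
      intro x _
      exact negMulLog_div_key hppos ENNReal.toReal_nonneg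
    rw [Finset.sum_congr rfl this, Finset.sum_add_distrib, ← Finset.sum_mul,
      sum_joint_eq_prob hXY y, ← hp]
    rw [negMulLog]
    ring

lemma entropy_pair_of_fac {α β : Type*} [Fintype α] [Fintype β] [IsProbabilityMeasure μ]
    {X : Ω → α} {Y : Ω → β}
    (hX : ∀ x, MeasurableSet {ω | X ω = x}) (hY : ∀ y, MeasurableSet {ω | Y ω = y})
    (hfac : ∀ x y, (μ {ω | X ω = x ∧ Y ω = y}).toReal = prob μ X x * prob μ Y y) :
    entropy μ (fun ω => (X ω, Y ω)) = entropy μ X + entropy μ Y := by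
  rw [entropy, entropy, entropy, tsum_fintype, tsum_fintype, tsum_fintype,
    Fintype.sum_prod_type]
  have : ∀ x ∈ Finset.univ, ∀ y ∈ Finset.univ,
      negMulLog (prob μ (fun ω => (X ω, Y ω)) (x, y))
      = prob μ Y y * negMulLog (prob μ X x) + prob μ X x * negMulLog (prob μ Y y) := by
    intro x _ y _
    rw [prob_pair, hfac, negMulLog_mul]
  calc ∑ x, ∑ y, negMulLog (prob μ (fun ω => (X ω, Y ω)) (x, y))
      = ∑ x, ∑ y, (prob μ Y y * negMulLog (prob μ X x)
          + prob μ X x * negMulLog (prob μ Y y)) := by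
        apply Finset.sum_congr rfl; intro x hx
        exact Finset.sum_congr rfl (this x hx)
    _ = ∑ x, ((∑ y, prob μ Y y) * negMulLog (prob μ X x)
          + prob μ X x * ∑ y, negMulLog (prob μ Y y)) := by
        apply Finset.sum_congr rfl; intro x _
        rw [Finset.sum_add_distrib, ← Finset.sum_mul, ← Finset.mul_sum]
    _ = ∑ x, negMulLog (prob μ X x) + ∑ y, negMulLog (prob μ Y y) := by
        rw [sum_prob_eq_one hY]
        simp only [one_mul]
        rw [Finset.sum_add_distrib, ← Finset.sum_mul, sum_prob_eq_one hX, one_mul]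

end Aux2

lemma toReal_fac {Ω γ δ : Type*} [MeasurableSpace Ω] [MeasurableSpace γ] [MeasurableSpace δ]
    {μ : Measure Ω} {U : Ω → γ} {V : Ω → δ} (h : IndepFun U V μ)
    {s : Set γ} {t : Set δ} (hs : MeasurableSet s) (ht : MeasurableSet t) :
    (μ (U ⁻¹' s ∩ V ⁻¹' t)).toReal = (μ (U ⁻¹' s)).toReal * (μ (V ⁻¹' t)).toReal := by
  rw [h.measure_inter_preimage_eq_mul s t hs ht, ENNReal.toReal_mul]


/-- In the ISD setup, if moreover `X1` is independent of the pair `(X2, Z1)`, then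
`I(X2; Y1 | X1) = H(g1(X2, Z1)) − H(Z1)`. -/
theorem isd_condMutualInfo_eq
    {Ω 𝒳1 𝒳2 𝒵1 𝒯1 𝒴1 : Type*} [MeasurableSpace Ω]
    [Fintype 𝒳1] [Fintype 𝒳2] [Fintype 𝒵1] [Fintype 𝒯1] [Fintype 𝒴1]
    [MeasurableSpace 𝒳1] [MeasurableSingletonClass 𝒳1]
    [MeasurableSpace 𝒳2] [MeasurableSingletonClass 𝒳2]
    [MeasurableSpace 𝒵1] [MeasurableSingletonClass 𝒵1]
    (μ : Measure Ω) [IsProbabilityMeasure μ]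
    (g1 : 𝒳2 → 𝒵1 → 𝒯1) (hg1 : ∀ x2, Function.Injective (g1 x2))
    (f1 : 𝒳1 → 𝒯1 → 𝒴1) (hf1 : ∀ x1, Function.Injective (f1 x1))
    (X1 : Ω → 𝒳1) (X2 : Ω → 𝒳2) (Z1 : Ω → 𝒵1)
    (hX1 : Measurable X1) (hX2 : Measurable X2) (hZ1 : Measurable Z1)
    (hindepZ : IndepFun Z1 (fun ω => (X1 ω, X2 ω)) μ)
    (hindepX1 : IndepFun X1 (fun ω => (X2 ω, Z1 ω)) μ)
    (Y1 : Ω → 𝒴1) (hY1 : ∀ ω, Y1 ω = f1 (X1 ω) (g1 (X2 ω) (Z1 ω))) :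
    condMutualInfo μ X2 Y1 X1
      = entropy μ (fun ω => g1 (X2 ω) (Z1 ω)) - entropy μ Z1 := by
  classical
  set T : Ω → 𝒯1 := fun ω => g1 (X2 ω) (Z1 ω) with hT
  -- measurability of all events expressible through (X1, X2, Z1)
  have hW : Measurable (fun ω => (X1 ω, (X2 ω, Z1 ω))) := hX1.prodMk (hX2.prodMk hZ1)
  have hmeas : ∀ S : Set (𝒳1 × 𝒳2 × 𝒵1),
      MeasurableSet {ω | (X1 ω, (X2 ω, Z1 ω)) ∈ S} :=
    fun S => hW MeasurableSet.of_discrete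
  have hP12 : Measurable (fun ω => (X2 ω, Z1 ω)) := hX2.prodMk hZ1
  have hP01 : Measurable (fun ω => (X1 ω, X2 ω)) := hX1.prodMk hX2
  -- event measurability
  have hmX1 : ∀ x, MeasurableSet {ω | X1 ω = x} :=
    fun x => hX1 (measurableSet_singleton x)
  have hmX2 : ∀ x, MeasurableSet {ω | X2 ω = x} :=
    fun x => hX2 (measurableSet_singleton x)
  have hmZ1 : ∀ z, MeasurableSet {ω | Z1 ω = z} :=
    fun z => hZ1 (measurableSet_singleton z)
  have hmT : ∀ t, MeasurableSet {ω | T ω = t} := by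
    intro t
    have hset : {ω | T ω = t}
        = (fun ω => (X2 ω, Z1 ω)) ⁻¹' {q : 𝒳2 × 𝒵1 | g1 q.1 q.2 = t} := by
      ext ω; simp [hT]
    rw [hset]; exact hP12 MeasurableSet.of_discrete
  have hm1 : ∀ x2 x1, MeasurableSet {ω | X2 ω = x2 ∧ X1 ω = x1} :=
    fun x2 x1 => (hmX2 x2).inter (hmX1 x1)
  have hm2 : ∀ (x : 𝒳2) (p : 𝒴1 × 𝒳1),
      MeasurableSet {ω | X2 ω = x ∧ (Y1 ω, X1 ω) = p} := by
    intro x p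
    have hset : {ω | X2 ω = x ∧ (Y1 ω, X1 ω) = p}
        = {ω | (X1 ω, (X2 ω, Z1 ω)) ∈
            {q : 𝒳1 × 𝒳2 × 𝒵1 | q.2.1 = x ∧ (f1 q.1 (g1 q.2.1 q.2.2), q.1) = p}} := by
      ext ω; simp [hY1]
    rw [hset]; exact hmeas _
  -- factorizations
  have fac1 : ∀ x2 x1, (μ {ω | X2 ω = x2 ∧ X1 ω = x1}).toReal
      = prob μ X2 x2 * prob μ X1 x1 := by
    intro x2 x1
    have hset : {ω | X2 ω = x2 ∧ X1 ω = x1}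
        = X1 ⁻¹' {x1} ∩ (fun ω => (X2 ω, Z1 ω)) ⁻¹' {q : 𝒳2 × 𝒵1 | q.1 = x2} := by
      ext ω; simp [and_comm]
    rw [hset, toReal_fac hindepX1 (measurableSet_singleton x1) MeasurableSet.of_discrete]
    have e1 : X1 ⁻¹' {x1} = {ω | X1 ω = x1} := by ext ω; simp
    have e2 : (fun ω => (X2 ω, Z1 ω)) ⁻¹' {q : 𝒳2 × 𝒵1 | q.1 = x2}
        = {ω | X2 ω = x2} := by ext ω; simp
    rw [e1, e2, prob, prob, mul_comm]
  have fac2 : ∀ (p : 𝒳2 × 𝒯1) (x1 : 𝒳1),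
      (μ {ω | (X2 ω, T ω) = p ∧ X1 ω = x1}).toReal
      = prob μ (fun ω => (X2 ω, T ω)) p * prob μ X1 x1 := by
    intro p x1
    have hset : {ω | (X2 ω, T ω) = p ∧ X1 ω = x1}
        = X1 ⁻¹' {x1} ∩ (fun ω => (X2 ω, Z1 ω)) ⁻¹' {q : 𝒳2 × 𝒵1 | (q.1, g1 q.1 q.2) = p} := by
      ext ω; simp [hT, and_comm]
    rw [hset, toReal_fac hindepX1 (measurableSet_singleton x1) MeasurableSet.of_discrete]
    have e1 : X1 ⁻¹' {x1} = {ω | X1 ω = x1} := by ext ω; simp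
    have e2 : (fun ω => (X2 ω, Z1 ω)) ⁻¹' {q : 𝒳2 × 𝒵1 | (q.1, g1 q.1 q.2) = p}
        = {ω | (X2 ω, T ω) = p} := by ext ω; simp [hT]
    rw [e1, e2, prob, prob, mul_comm]
  have fac3 : ∀ (t : 𝒯1) (x1 : 𝒳1),
      (μ {ω | T ω = t ∧ X1 ω = x1}).toReal = prob μ T t * prob μ X1 x1 := by
    intro t x1
    have hset : {ω | T ω = t ∧ X1 ω = x1}
        = X1 ⁻¹' {x1} ∩ (fun ω => (X2 ω, Z1 ω)) ⁻¹' {q : 𝒳2 × 𝒵1 | g1 q.1 q.2 = t} := by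
      ext ω; simp [hT, and_comm]
    rw [hset, toReal_fac hindepX1 (measurableSet_singleton x1) MeasurableSet.of_discrete]
    have e1 : X1 ⁻¹' {x1} = {ω | X1 ω = x1} := by ext ω; simp
    have e2 : (fun ω => (X2 ω, Z1 ω)) ⁻¹' {q : 𝒳2 × 𝒵1 | g1 q.1 q.2 = t}
        = {ω | T ω = t} := by ext ω; simp [hT]
    rw [e1, e2, prob, prob, mul_comm]
  have fac4 : ∀ (x2 : 𝒳2) (z : 𝒵1),
      (μ {ω | X2 ω = x2 ∧ Z1 ω = z}).toReal = prob μ X2 x2 * prob μ Z1 z := by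
    intro x2 z
    have hset : {ω | X2 ω = x2 ∧ Z1 ω = z}
        = Z1 ⁻¹' {z} ∩ (fun ω => (X1 ω, X2 ω)) ⁻¹' {p : 𝒳1 × 𝒳2 | p.2 = x2} := by
      ext ω; simp [and_comm]
    rw [hset, toReal_fac hindepZ (measurableSet_singleton z) MeasurableSet.of_discrete]
    have e1 : Z1 ⁻¹' {z} = {ω | Z1 ω = z} := by ext ω; simp
    have e2 : (fun ω => (X1 ω, X2 ω)) ⁻¹' {p : 𝒳1 × 𝒳2 | p.2 = x2}
        = {ω | X2 ω = x2} := by ext ω; simp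
    rw [e1, e2, prob, prob, mul_comm]
  -- main entropy computations
  have E1 : condEntropy μ X2 X1
      = entropy μ (fun ω => (X2 ω, X1 ω)) - entropy μ X1 := condEntropy_eq_sub hm1
  have E2 : condEntropy μ X2 (fun ω => (Y1 ω, X1 ω))
      = entropy μ (fun ω => (X2 ω, (Y1 ω, X1 ω)))
        - entropy μ (fun ω => (Y1 ω, X1 ω)) := condEntropy_eq_sub hm2
  have E3 : entropy μ (fun ω => (X2 ω, X1 ω)) = entropy μ X2 + entropy μ X1 :=
    entropy_pair_of_fac hmX2 hmX1 fac1
  have E4 : entropy μ (fun ω => (X2 ω, (Y1 ω, X1 ω)))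
      = entropy μ (fun ω => ((X2 ω, T ω), X1 ω)) := by
    have heq : (fun ω => (X2 ω, (Y1 ω, X1 ω)))
        = (fun ω => (fun q : (𝒳2 × 𝒯1) × 𝒳1 => (q.1.1, (f1 q.2 q.1.2, q.2)))
            ((fun ω => ((X2 ω, T ω), X1 ω)) ω)) := by
      funext ω; simp [hY1, hT]
    have hinj : Function.Injective
        (fun q : (𝒳2 × 𝒯1) × 𝒳1 => (q.1.1, (f1 q.2 q.1.2, q.2))) := by
      rintro ⟨⟨a, t⟩, x⟩ ⟨⟨b, s⟩, y⟩ h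
      simp only [Prod.mk.injEq] at h
      obtain ⟨h1, h2, h3⟩ := h
      subst h1; subst h3
      simp only [Prod.mk.injEq, and_true, true_and]
      exact hf1 _ h2
    rw [heq]
    exact entropy_comp_inj μ _ _ hinj
  have E5 : entropy μ (fun ω => ((X2 ω, T ω), X1 ω))
      = entropy μ (fun ω => (X2 ω, T ω)) + entropy μ X1 := by
    refine entropy_pair_of_fac ?_ hmX1 fac2
    intro p
    have hset : {ω | (X2 ω, T ω) = p}
        = (fun ω => (X2 ω, Z1 ω)) ⁻¹' {q : 𝒳2 × 𝒵1 | (q.1, g1 q.1 q.2) = p} := by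
      ext ω; simp [hT]
    rw [hset]; exact hP12 MeasurableSet.of_discrete
  have E6 : entropy μ (fun ω => (X2 ω, T ω))
      = entropy μ (fun ω => (X2 ω, Z1 ω)) := by
    have heq : (fun ω => (X2 ω, T ω))
        = (fun ω => (fun q : 𝒳2 × 𝒵1 => (q.1, g1 q.1 q.2))
            ((fun ω => (X2 ω, Z1 ω)) ω)) := by
      funext ω; simp [hT]
    have hinj : Function.Injective (fun q : 𝒳2 × 𝒵1 => (q.1, g1 q.1 q.2)) := by
      rintro ⟨a, z⟩ ⟨b, w⟩ h
      simp only [Prod.mk.injEq] at h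
      obtain ⟨h1, h2⟩ := h
      subst h1
      simp only [Prod.mk.injEq, true_and]
      exact hg1 _ h2
    rw [heq]
    exact entropy_comp_inj μ _ _ hinj
  have E7 : entropy μ (fun ω => (X2 ω, Z1 ω)) = entropy μ X2 + entropy μ Z1 :=
    entropy_pair_of_fac hmX2 hmZ1 fac4
  have E8 : entropy μ (fun ω => (Y1 ω, X1 ω))
      = entropy μ (fun ω => (T ω, X1 ω)) := by
    have heq : (fun ω => (Y1 ω, X1 ω))
        = (fun ω => (fun q : 𝒯1 × 𝒳1 => (f1 q.2 q.1, q.2))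
            ((fun ω => (T ω, X1 ω)) ω)) := by
      funext ω; simp [hY1, hT]
    have hinj : Function.Injective (fun q : 𝒯1 × 𝒳1 => (f1 q.2 q.1, q.2)) := by
      rintro ⟨t, x⟩ ⟨s, y⟩ h
      simp only [Prod.mk.injEq] at h
      obtain ⟨h1, h2⟩ := h
      subst h2
      simp only [Prod.mk.injEq, and_true]
      exact hf1 _ h1
    rw [heq]
    exact entropy_comp_inj μ _ _ hinj
  have E9 : entropy μ (fun ω => (T ω, X1 ω)) = entropy μ T + entropy μ X1 :=
    entropy_pair_of_fac hmT hmX1 fac3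
  rw [condMutualInfo, E1, E2, E3, E4, E5, E6, E7, E8, E9]
  ring
end

section
/- For s > 0, define φ_s : [0,1] → ℝ by φ_s(π) = π(1+s)·log(1+s) + (1−π)·s·log s − (π+s)·log(π+s), and define π₀(s) = (1+s)^{1+s} / (s^s · e) − s. Then for every σ ∈ (0,1], the maximum of φ_s over the interval [0, σ] is attained at the point π* = min(σ, π₀(s)); that is, φ_s(π) ≤ φ_s(min(σ, π₀(s))) for all π ∈ [0, σ]. -/
open Real

/-- Wyner's rate function `φ_s(p) = p(1+s)log(1+s) + (1−p)s·log s − (p+s)log(p+s)`. -/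
noncomputable def phi (s p : ℝ) : ℝ :=
  p * (1 + s) * Real.log (1 + s) + (1 - p) * s * Real.log s - (p + s) * Real.log (p + s)

/-- The optimal duty cycle `π₀(s) = (1+s)^{1+s} / (s^s · e) − s`. -/
noncomputable def pi0 (s : ℝ) : ℝ :=
  (1 + s) ^ (1 + s) / (s ^ s * Real.exp 1) - s

lemma pi0_add (s : ℝ) (hs : 0 < s) :
    pi0 s + s = Real.exp ((1 + s) * Real.log (1 + s) - s * Real.log s - 1) := by
  have h1 : (0:ℝ) < 1 + s := by linarith
  have e1 : (1 + s) ^ (1 + s) = Real.exp ((1 + s) * Real.log (1 + s)) := by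
    rw [Real.rpow_def_of_pos h1]; ring_nf
  have e2 : s ^ s = Real.exp (s * Real.log s) := by
    rw [Real.rpow_def_of_pos hs]; ring_nf
  rw [pi0, e1, e2, ← Real.exp_add, ← Real.exp_sub]
  ring_nf

lemma phi_hasDerivAt (s : ℝ) (p : ℝ) (hp : 0 < p + s) :
    HasDerivAt (phi s)
      ((1 + s) * Real.log (1 + s) - s * Real.log s - Real.log (p + s) - 1) p := by
  have h1 : HasDerivAt (fun p : ℝ => p * (1 + s) * Real.log (1 + s))
      ((1 + s) * Real.log (1 + s)) p := by
    simpa [mul_assoc] using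
      (hasDerivAt_id p).mul_const ((1 + s) * Real.log (1 + s))
  have h2 : HasDerivAt (fun p : ℝ => (1 - p) * s * Real.log s)
      (-(s * Real.log s)) p := by
    have : HasDerivAt (fun p : ℝ => (1 - p)) (-1) p := by
      simpa using (hasDerivAt_id p).const_sub 1
    simpa [mul_assoc] using this.mul_const (s * Real.log s)
  have h3 : HasDerivAt (fun p : ℝ => (p + s) * Real.log (p + s))
      (Real.log (p + s) + 1) p := by
    have hadd : HasDerivAt (fun p : ℝ => p + s) 1 p := by
      simpa using (hasDerivAt_id p).add_const s
    have := (Real.hasDerivAt_mul_log (ne_of_gt hp)).comp p hadd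
    simpa [Function.comp_def] using this
  have := (h1.add h2).sub h3
  exact this.congr_deriv (by ring)

lemma phi_mono (s : ℝ) (hs : 0 < s) (hpi : 0 ≤ pi0 s) :
    MonotoneOn (phi s) (Set.Icc 0 (pi0 s)) := by
  have key : ∀ x ∈ Set.Icc (0:ℝ) (pi0 s), 0 < x + s := fun x hx => by
    have := hx.1; linarith
  apply monotoneOn_of_deriv_nonneg (convex_Icc _ _)
  · intro x hx
    exact (phi_hasDerivAt s x (key x hx)).continuousAt.continuousWithinAt
  · intro x hx
    rw [interior_Icc] at hx
    exact (phi_hasDerivAt s x (key x (Set.mem_Icc_of_Ioo hx))).differentiableAt.differentiableWithinAt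
  · intro x hx
    rw [interior_Icc] at hx
    have hx' := Set.mem_Icc_of_Ioo hx
    rw [(phi_hasDerivAt s x (key x hx')).deriv]
    have hxs : x + s ≤ pi0 s + s := by linarith [hx'.2]
    rw [pi0_add s hs] at hxs
    have := Real.log_le_log (key x hx') hxs
    rw [Real.log_exp] at this
    linarith

lemma phi_anti (s : ℝ) (hs : 0 < s) (b : ℝ) (hb : pi0 s ≤ b) :
    AntitoneOn (phi s) (Set.Icc (pi0 s) b) := by
  have hL : 0 < pi0 s + s := by
    rw [pi0_add s hs]; exact Real.exp_pos _
  have key : ∀ x ∈ Set.Icc (pi0 s) b, 0 < x + s := fun x hx => by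
    have := hx.1; linarith
  apply antitoneOn_of_deriv_nonpos (convex_Icc _ _)
  · intro x hx
    exact (phi_hasDerivAt s x (key x hx)).continuousAt.continuousWithinAt
  · intro x hx
    rw [interior_Icc] at hx
    exact (phi_hasDerivAt s x (key x (Set.mem_Icc_of_Ioo hx))).differentiableAt.differentiableWithinAt
  · intro x hx
    rw [interior_Icc] at hx
    have hx' := Set.mem_Icc_of_Ioo hx
    rw [(phi_hasDerivAt s x (key x hx')).deriv]
    have hxs : pi0 s + s ≤ x + s := by linarith [hx'.1]
    have := Real.log_le_log hL hxs
    rw [pi0_add s hs, Real.log_exp] at this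
    linarith

/-- For every `σ ∈ (0,1]`, the maximum of `φ_s` over `[0, σ]` is attained at
`π* = min(σ, π₀(s))`. -/
theorem phi_max_at_min (s : ℝ) (hs : 0 < s) (σ : ℝ) (hσ : σ ∈ Set.Ioc (0:ℝ) 1)
    (p : ℝ) (hp : p ∈ Set.Icc (0:ℝ) σ) :
    phi s p ≤ phi s (min σ (pi0 s)) := by
  obtain ⟨hp0, hpσ⟩ := hp
  rcases le_total p (min σ (pi0 s)) with h | h
  · -- increasing part
    have hm0 : 0 ≤ min σ (pi0 s) := le_trans hp0 h
    have hpi0 : 0 ≤ pi0 s := le_trans hm0 (min_le_right _ _)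
    exact phi_mono s hs hpi0 ⟨hp0, le_trans h (min_le_right _ _)⟩
      ⟨hm0, min_le_right _ _⟩ h
  · -- decreasing part
    rcases le_total σ (pi0 s) with hcase | hcase
    · -- min = σ, and p ≤ σ ≤ p so p = min
      have : p = min σ (pi0 s) := le_antisymm (by simp [min_eq_left hcase, hpσ]) h
      rw [this]
    · have hmin : min σ (pi0 s) = pi0 s := min_eq_right hcase
      rw [hmin] at h ⊢
      exact phi_anti s hs σ hcase ⟨le_refl _, hcase⟩ ⟨h, hpσ⟩ h
end

section
/- For s > 0, define φ_s(π) = π(1+s)·log(1+s) + (1−π)·s·log s − (π+s)·log(π+s). Then for every fixed π ∈ [0,1], the limit as s → ∞ of s·φ_s(π) equals π(1−π)/2. -/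
open Real Filter Topology

/-- For fixed `p ∈ [0,1]`, `s · φ_s(p) → p(1−p)/2` as `s → ∞`. -/
theorem phi_asymptotic (p : ℝ) (hp : p ∈ Set.Icc (0:ℝ) 1) :
    Tendsto (fun s : ℝ => s * phi s p) atTop (nhds (p * (1 - p) / 2)) := by
  obtain ⟨hp0, hp1⟩ := hp
  set N : ℝ → ℝ := fun x => p * (1 + x) * Real.log (1 + x)
      - (1 + p * x) * Real.log (1 + p * x) with hN
  -- derivative facts
  have h1x : ∀ x : ℝ, 0 < x → (0:ℝ) < 1 + x := fun x hx => by linarith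
  have h1px : ∀ x : ℝ, 0 < x → (0:ℝ) < 1 + p * x := fun x hx =>
    by nlinarith
  have hderivN : ∀ x : ℝ, 0 < x →
      HasDerivAt N (p * Real.log (1 + x) - p * Real.log (1 + p * x)) x := by
    intro x hx
    have hA : HasDerivAt (fun x : ℝ => 1 + x) 1 x :=
      (hasDerivAt_id x).const_add 1
    have hB : HasDerivAt (fun x : ℝ => 1 + p * x) p x := by
      simpa using ((hasDerivAt_id x).const_mul p).const_add 1
    have hlogA : HasDerivAt (fun x : ℝ => Real.log (1 + x)) (1 / (1 + x)) x := by
      simpa using (hA.log (h1x x hx).ne')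
    have hlogB : HasDerivAt (fun x : ℝ => Real.log (1 + p * x)) (p / (1 + p * x)) x := by
      simpa using (hB.log (h1px x hx).ne')
    have hT1 : HasDerivAt (fun x : ℝ => p * (1 + x) * Real.log (1 + x))
        (p * Real.log (1 + x) + p * (1 + x) * (1 / (1 + x))) x := by
      have := ((hA.const_mul p).fun_mul hlogA)
      exact this.congr_deriv (by ring)
    have hT2 : HasDerivAt (fun x : ℝ => (1 + p * x) * Real.log (1 + p * x))
        (p * Real.log (1 + p * x) + (1 + p * x) * (p / (1 + p * x))) x := by
      have := hB.fun_mul hlogB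
      exact this
    have := hT1.fun_sub hT2
    refine this.congr_deriv ?_
    have h1 := (h1x x hx).ne'
    have h2 := (h1px x hx).ne'
    field_simp
    ring
  -- key limit at 0+
  have key : Tendsto (fun x => N x / x ^ 2) (𝓝[>] (0:ℝ)) (𝓝 (p * (1 - p) / 2)) := by
    have hmem : ∀ᶠ x : ℝ in 𝓝[>] (0:ℝ), 0 < x := self_mem_nhdsWithin
    apply HasDerivAt.lhopital_zero_nhdsGT
      (f' := fun x => p * Real.log (1 + x) - p * Real.log (1 + p * x))
      (g' := fun x => 2 * x)
    · exact hmem.mono fun x hx => hderivN x hx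
    · exact Eventually.of_forall fun x => by
        simpa [mul_comm] using (hasDerivAt_pow 2 x)
    · exact hmem.mono fun x hx => by positivity
    · have : ContinuousAt N 0 := by
        simp only [hN]
        fun_prop (disch := norm_num)
      have h : Tendsto N (𝓝[>] (0:ℝ)) (𝓝 (N 0)) :=
        this.tendsto.mono_left nhdsWithin_le_nhds
      simpa [hN] using h
    · have : Tendsto (fun x : ℝ => x ^ 2) (𝓝 (0:ℝ)) (𝓝 (0:ℝ)) := by
        simpa using (continuous_pow 2).tendsto (0:ℝ)
      exact (this.mono_left nhdsWithin_le_nhds : Tendsto (fun x : ℝ => x ^ 2) (𝓝[>] (0:ℝ)) (𝓝 0))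
    · -- second L'Hôpital
      apply HasDerivAt.lhopital_zero_nhdsGT
        (f' := fun x => p * (1 / (1 + x)) - p * (p / (1 + p * x)))
        (g' := fun x => 2)
      · refine hmem.mono fun x hx => ?_
        have hA : HasDerivAt (fun x : ℝ => 1 + x) 1 x :=
          (hasDerivAt_id x).const_add 1
        have hB : HasDerivAt (fun x : ℝ => 1 + p * x) p x := by
          simpa using ((hasDerivAt_id x).const_mul p).const_add 1
        have hlogA : HasDerivAt (fun x : ℝ => Real.log (1 + x)) (1 / (1 + x)) x := by
          simpa using (hA.log (h1x x hx).ne')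
        have hlogB : HasDerivAt (fun x : ℝ => Real.log (1 + p * x)) (p / (1 + p * x)) x := by
          simpa using (hB.log (h1px x hx).ne')
        exact (hlogA.const_mul p).sub (hlogB.const_mul p)
      · exact Eventually.of_forall fun x => by
          simpa using ((hasDerivAt_id x).const_mul (2:ℝ))
      · exact Eventually.of_forall fun _ => two_ne_zero
      · have : ContinuousAt (fun x : ℝ => p * Real.log (1 + x) - p * Real.log (1 + p * x)) 0 := by
          fun_prop (disch := norm_num)
        have h : Tendsto (fun x : ℝ => p * Real.log (1 + x) - p * Real.log (1 + p * x))
            (𝓝[>] (0:ℝ)) (𝓝 (p * Real.log (1 + 0) - p * Real.log (1 + p * 0))) :=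
          this.tendsto.mono_left nhdsWithin_le_nhds
        simpa using h
      · have : Tendsto (fun x : ℝ => 2 * x) (𝓝 (0:ℝ)) (𝓝 (0:ℝ)) := by
          simpa using (continuous_mul_left (2:ℝ)).tendsto 0
        exact (this.mono_left nhdsWithin_le_nhds : Tendsto (fun x : ℝ => 2 * x) (𝓝[>] (0:ℝ)) (𝓝 0))
      · have hc : ContinuousAt
            (fun x : ℝ => (p * (1 / (1 + x)) - p * (p / (1 + p * x))) / 2) 0 := by
          have h1 : (1:ℝ) + 0 ≠ 0 := by norm_num
          have h2 : (1:ℝ) + p * 0 ≠ 0 := by norm_num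
          fun_prop (disch := assumption)
        have h : Tendsto (fun x : ℝ => (p * (1 / (1 + x)) - p * (p / (1 + p * x))) / 2)
            (𝓝[>] (0:ℝ)) (𝓝 ((p * (1 / (1 + (0:ℝ))) - p * (p / (1 + p * 0))) / 2)) :=
          hc.tendsto.mono_left nhdsWithin_le_nhds
        have : ((p * (1 / (1 + (0:ℝ))) - p * (p / (1 + p * 0))) / 2) = p * (1 - p) / 2 := by
          norm_num; ring
        rw [this] at h
        exact h
  -- transfer to atTop via x = 1/s
  have hinv : Tendsto (fun s : ℝ => s⁻¹) atTop (𝓝[>] (0:ℝ)) := by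
    rw [tendsto_nhdsWithin_iff]
    refine ⟨tendsto_inv_atTop_zero, ?_⟩
    filter_upwards [eventually_gt_atTop (0:ℝ)] with s hs
    exact inv_pos.mpr hs
  have hcomp := key.comp hinv
  apply hcomp.congr'
  filter_upwards [eventually_gt_atTop (0:ℝ)] with s hs
  have hs0 : s ≠ 0 := hs.ne'
  have h1s : (0:ℝ) < 1 + s := by linarith
  have hps : (0:ℝ) < p + s := by linarith
  have e1 : (1:ℝ) + s⁻¹ = (1 + s) / s := by field_simp; ring
  have e2 : (1:ℝ) + p * s⁻¹ = (p + s) / s := by field_simp; ring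
  show N s⁻¹ / (s⁻¹) ^ 2 = s * phi s p
  rw [hN]
  simp only [e1, e2, Real.log_div h1s.ne' hs0, Real.log_div hps.ne' hs0, phi]
  field_simp
  ring
end

section
/- For π ∈ (0,1), define f_π : (0,∞) → ℝ by f_π(s) = −(s+π)·log(s+π) + (1+s+π)·log(1+s+π) + (1−π)·s·log s − (1−2π)·(1+s)·log(1+s) − π·(2+s)·log(2+s). Then the limit as s → ∞ of s²·f_π(s) equals π(1−π)/2. -/
open Real Filter Topology

/-- The gap function
`f_p(s) = −(s+p)log(s+p) + (1+s+p)log(1+s+p) + (1−p)s·log s − (1−2p)(1+s)log(1+s)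
          − p(2+s)log(2+s)`. -/
noncomputable def gapF (p s : ℝ) : ℝ :=
  -((s + p) * Real.log (s + p)) + (1 + s + p) * Real.log (1 + s + p)
    + (1 - p) * s * Real.log s - (1 - 2 * p) * (1 + s) * Real.log (1 + s)
    - p * (2 + s) * Real.log (2 + s)

/-- Remainder of the third-order expansion of `log (s + c) - log s` in powers of `1/s`. -/
noncomputable def rfun (c s : ℝ) : ℝ :=
  Real.log (s + c) - Real.log s - c / s + c ^ 2 / (2 * s ^ 2) - c ^ 3 / (3 * s ^ 3)

lemma rfun3 (c : ℝ) : Tendsto (fun s : ℝ => s ^ 3 * rfun c s) atTop (nhds 0) := by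
  apply squeeze_zero_norm' (a := fun s : ℝ => 2 * |c| ^ 4 / s)
  · filter_upwards [eventually_ge_atTop (2 * |c| + 1)] with s hs
    have hc : (0:ℝ) ≤ |c| := abs_nonneg c
    have hs0 : (0:ℝ) < s := by nlinarith
    have hsc : (0:ℝ) < s + c := by
      have := neg_abs_le c; nlinarith
    have hx : |(-(c / s))| ≤ 1 / 2 := by
      rw [abs_neg, abs_div, abs_of_pos hs0, div_le_iff₀ hs0]
      nlinarith
    have hx1 : |(-(c / s))| < 1 := lt_of_le_of_lt hx (by norm_num)
    have h := Real.abs_log_sub_add_sum_range_le hx1 3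
    have hsum : (∑ i ∈ Finset.range 3, (-(c / s)) ^ (i + 1) / (i + 1)) =
        -(c / s) + (c / s) ^ 2 / 2 - (c / s) ^ 3 / 3 := by
      rw [Finset.sum_range_succ, Finset.sum_range_succ, Finset.sum_range_succ,
        Finset.sum_range_zero]
      norm_num; ring
    have hlog : Real.log (1 - -(c / s)) = Real.log (s + c) - Real.log s := by
      rw [← Real.log_div hsc.ne' hs0.ne']
      congr 1
      field_simp
      ring
    have hr : rfun c s = (∑ i ∈ Finset.range 3, (-(c / s)) ^ (i + 1) / (i + 1))
        + Real.log (1 - -(c / s)) := by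
      rw [hsum, hlog]
      unfold rfun
      field_simp
      ring
    have hb : |rfun c s| ≤ 2 * |c| ^ 4 / s ^ 4 := by
      rw [hr]
      refine h.trans ?_
      have h1 : |(-(c / s))| ^ 4 = |c| ^ 4 / s ^ 4 := by
        rw [abs_neg, abs_div, abs_of_pos hs0]; ring
      have h2 : (1:ℝ) / 2 ≤ 1 - |(-(c / s))| := by linarith
      rw [h1]
      rw [div_le_div_iff₀ (by linarith) (by positivity)]
      have hs4 : (0:ℝ) < s ^ 4 := by positivity
      rw [div_mul_cancel₀ _ hs4.ne']
      nlinarith [pow_nonneg hc 4]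
    have : ‖s ^ 3 * rfun c s‖ = s ^ 3 * |rfun c s| := by
      rw [norm_mul, Real.norm_eq_abs, Real.norm_eq_abs, abs_of_pos (by positivity : (0:ℝ) < s ^ 3)]
    rw [this]
    calc s ^ 3 * |rfun c s| ≤ s ^ 3 * (2 * |c| ^ 4 / s ^ 4) := by
          exact mul_le_mul_of_nonneg_left hb (by positivity)
      _ = 2 * |c| ^ 4 / s := by field_simp
  · exact tendsto_const_nhds.div_atTop tendsto_id

lemma rfun2 (c : ℝ) : Tendsto (fun s : ℝ => s ^ 2 * rfun c s) atTop (nhds 0) := by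
  have h := (rfun3 c).mul tendsto_inv_atTop_zero
  rw [mul_zero] at h
  refine h.congr' ?_
  filter_upwards [eventually_gt_atTop (0:ℝ)] with s hs
  field_simp

/-- For `p ∈ (0,1)`, `s² · f_p(s) → p(1−p)/2` as `s → ∞`. -/
theorem gapF_asymptotic (p : ℝ) (hp : p ∈ Set.Ioo (0:ℝ) 1) :
    Tendsto (fun s : ℝ => s ^ 2 * gapF p s) atTop (nhds (p * (1 - p) / 2)) := by
  have key : ∀ᶠ s in atTop, s ^ 2 * gapF p s =
      p * (1 - p) / 2 + (4 * p ^ 3 + 6 * p ^ 2 - 10 * p) / (3 * s)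
      + ((-1 : ℝ) * (s ^ 3 * rfun p s) + (-p) * (s ^ 2 * rfun p s))
      + ((1 : ℝ) * (s ^ 3 * rfun (1 + p) s) + (1 + p) * (s ^ 2 * rfun (1 + p) s))
      + ((-(1 - 2 * p)) * (s ^ 3 * rfun 1 s) + (-(1 - 2 * p)) * (s ^ 2 * rfun 1 s))
      + ((-p) * (s ^ 3 * rfun 2 s) + (-(2 * p)) * (s ^ 2 * rfun 2 s)) := by
    filter_upwards [eventually_gt_atTop (0:ℝ)] with s hs
    have e1 : (1:ℝ) + s + p = s + (1 + p) := by ring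
    have e2 : (1:ℝ) + s = s + 1 := by ring
    have e3 : (2:ℝ) + s = s + 2 := by ring
    unfold gapF rfun
    rw [e1, e2, e3]
    field_simp
    ring
  have hlim : Tendsto (fun s : ℝ =>
      p * (1 - p) / 2 + (4 * p ^ 3 + 6 * p ^ 2 - 10 * p) / (3 * s)
      + ((-1 : ℝ) * (s ^ 3 * rfun p s) + (-p) * (s ^ 2 * rfun p s))
      + ((1 : ℝ) * (s ^ 3 * rfun (1 + p) s) + (1 + p) * (s ^ 2 * rfun (1 + p) s))
      + ((-(1 - 2 * p)) * (s ^ 3 * rfun 1 s) + (-(1 - 2 * p)) * (s ^ 2 * rfun 1 s))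
      + ((-p) * (s ^ 3 * rfun 2 s) + (-(2 * p)) * (s ^ 2 * rfun 2 s)))
      atTop (nhds (p * (1 - p) / 2 + 0 + (-1 * 0 + -p * 0) + (1 * 0 + (1 + p) * 0)
        + (-(1 - 2 * p) * 0 + -(1 - 2 * p) * 0) + (-p * 0 + -(2 * p) * 0))) := by
    have hdiv : Tendsto (fun s : ℝ => (4 * p ^ 3 + 6 * p ^ 2 - 10 * p) / (3 * s))
        atTop (nhds 0) := by
      apply tendsto_const_nhds.div_atTop
      exact Tendsto.const_mul_atTop (by norm_num) tendsto_id
    exact ((((tendsto_const_nhds.add hdiv).add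
      (((rfun3 p).const_mul _).add ((rfun2 p).const_mul _))).add
      (((rfun3 (1 + p)).const_mul _).add ((rfun2 (1 + p)).const_mul _))).add
      (((rfun3 1).const_mul _).add ((rfun2 1).const_mul _))).add
      (((rfun3 2).const_mul _).add ((rfun2 2).const_mul _))
  have : (p * (1 - p) / 2 + 0 + (-1 * 0 + -p * 0) + (1 * 0 + (1 + p) * 0)
      + (-(1 - 2 * p) * 0 + -(1 - 2 * p) * 0) + (-p * 0 + -(2 * p) * 0)) = p * (1 - p) / 2 := by
    ring
  rw [this] at hlim
  exact Tendsto.congr' (by filter_upwards [key] with s h using h.symm) hlim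
end
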